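/- The free commutative doubly idempotent semiring with constants 0 and 1 on a two-element generating set has exactly 14 elements. Equivalently, the free semilattice on two generators x, y has exactly 3 elements (x, y, xy) and exactly 7 subalgebras including the empty set (∅, {x}, {y}, {xy}, {x,xy}, {y,xy}, {x,y,xy}), and the free semiring has cardinality twice the number of these subalgebras. -/

import Mathlib

/-- A commutative doubly idempotent semiring with constants `0` and `1`:
`(S,·,1)` and `(S,+,0)` are commutative idempotent monoids, `·` distributes
over `+`, and `x·0 = 0`. -/
class CDIS (S : Type) where
  mul : S → S → S
  add : S → S → S
  zero : S
  one : S
  mul_assoc : ∀ a b c, mul (mul a b) c = mul a (mul b c)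
  mul_comm : ∀ a b, mul a b = mul b a
  mul_idem : ∀ a, mul a a = a
  mul_one : ∀ a, mul a one = a
  add_assoc : ∀ a b c, add (add a b) c = add a (add b c)
  add_comm : ∀ a b, add a b = add b a
  add_idem : ∀ a, add a a = a
  add_zero : ∀ a, add a zero = a
  mul_add : ∀ a b c, mul a (add b c) = add (mul a b) (mul a c)
  mul_zero : ∀ a, mul a zero = zero

/-- Homomorphisms of commutative doubly idempotent semirings with constants. -/
def CDIS.IsHom {S T : Type} [CDIS S] [CDIS T] (f : S → T) : Prop :=
  (∀ a b, f (CDIS.mul a b) = CDIS.mul (f a) (f b)) ∧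
  (∀ a b, f (CDIS.add a b) = CDIS.add (f a) (f b)) ∧
  f (CDIS.zero : S) = CDIS.zero ∧ f (CDIS.one : S) = CDIS.one

/-- `F` with insertion of generators `ι : X → F` is free in the variety of
commutative doubly idempotent semirings with constants. -/
def CDIS.IsFree (X : Type) (F : Type) [CDIS F] (ι : X → F) : Prop :=
  ∀ (T : Type) (_ : CDIS T) (g : X → T),
    ∃! f : F → T, CDIS.IsHom f ∧ f ∘ ι = g

/-- The free semilattice on two generators, realized as nonempty finite
subsets of `Bool` under union. -/
def FreeSL2 : Type := {s : Finset Bool // s.Nonempty}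

/-- The (union) semilattice operation on `FreeSL2`. -/
def FreeSL2.op (a b : FreeSL2) : FreeSL2 :=
  ⟨a.1 ∪ b.1, a.2.mono Finset.subset_union_left⟩

/-! Expanding `(a + b)² = a + b` gives the absorption law `a + b + ab = a + b`, so a sum of
monomials only depends on the union-closure of its set of monomials. The free algebra on `X` is
therefore the algebra of finite union-closed families of finite subsets of `X`, with
`S * T = S ⊻ T` and `S + T = S ∪ T ∪ S ⊻ T`; the map induced by `g : X → T` sends `S` to
`∑ s ∈ S, ∏ x ∈ s, g x`. Such a family either contains the empty monomial `1 = ∅` or not, and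
what remains is a subsemilattice of the free semilattice of nonempty subsets of `X`. -/

open Finset
open scoped FinsetFamily

section Idempotent
variable {ι κ M : Type*} [CommMonoid M] [DecidableEq ι] [DecidableEq κ]

@[to_additive]
lemma Finset.prod_mul_prod_of_subset_of_idempotent (hM : ∀ a : M, a * a = a) (f : ι → M)
    {s t : Finset ι} (h : s ⊆ t) : (∏ i ∈ t, f i) * ∏ i ∈ s, f i = ∏ i ∈ t, f i := by
  rw [← prod_sdiff h, mul_assoc, hM]

@[to_additive]
lemma Finset.prod_union_of_idempotent (hM : ∀ a : M, a * a = a) (f : ι → M) (s t : Finset ι) :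
    ∏ i ∈ s ∪ t, f i = (∏ i ∈ s, f i) * ∏ i ∈ t, f i := by
  rw [← prod_union_inter, prod_mul_prod_of_subset_of_idempotent hM f
    (inter_subset_left.trans subset_union_left)]

@[to_additive]
lemma Finset.prod_image_of_idempotent (hM : ∀ a : M, a * a = a) (φ : ι → κ) (f : κ → M)
    (s : Finset ι) : ∏ k ∈ s.image φ, f k = ∏ i ∈ s, f (φ i) := by
  induction s using Finset.induction_on with
  | empty => simp
  | insert a s ha ih =>
    rw [image_insert, insert_eq, prod_union_of_idempotent hM, prod_singleton, ih, prod_insert ha]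

lemma add_add_mul_of_idempotent {R : Type*} [CommSemiring R] (hadd : ∀ a : R, a + a = a)
    (hmul : ∀ a : R, a * a = a) (a b : R) : a + b + a * b = a + b :=
  calc a + b + a * b = a * a + (a * b + a * b) + b * b := by rw [hmul, hmul, hadd]; ring
    _ = (a + b) * (a + b) := by ring
    _ = a + b := hmul _

end Idempotent

namespace CDIS

instance toCommSemiring (S : Type) [CDIS S] : CommSemiring S where
  add := add
  zero := zero
  add_assoc := add_assoc
  add_comm := add_comm
  zero_add a := (add_comm zero a).trans (add_zero a)
  add_zero := add_zero
  nsmul := @nsmulRec S ⟨zero⟩ ⟨add⟩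
  mul := mul
  one := one
  mul_assoc := mul_assoc
  mul_comm := mul_comm
  one_mul a := (mul_comm one a).trans (mul_one a)
  mul_one := mul_one
  left_distrib := mul_add
  right_distrib a b c := by
    change mul (add a b) c = add (mul a c) (mul b c)
    rw [mul_comm, mul_add, mul_comm c a, mul_comm c b]
  zero_mul a := (mul_comm zero a).trans (mul_zero a)
  mul_zero := mul_zero
  npow := @npowRec S ⟨one⟩ ⟨mul⟩

variable {S T U : Type} [CDIS S] [CDIS T] [CDIS U]

lemma add_self (a : S) : a + a = a := add_idem a

lemma mul_self (a : S) : a * a = a := mul_idem a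

def IsHom.toRingHom {f : S → T} (hf : IsHom f) : S →+* T where
  toFun := f
  map_mul' := hf.1
  map_add' := hf.2.1
  map_zero' := hf.2.2.1
  map_one' := hf.2.2.2

lemma IsHom.comp {f : S → T} {g : T → U} (hf : IsHom f) (hg : IsHom g) : IsHom (g ∘ f) :=
  let e := hg.toRingHom.comp hf.toRingHom
  ⟨e.map_mul, e.map_add, e.map_zero, e.map_one⟩

lemma isHom_id : IsHom (id : S → S) := ⟨fun _ _ => rfl, fun _ _ => rfl, rfl, rfl⟩

lemma IsFree.nat_card_eq {X F G : Type} [CDIS F] [CDIS G] {ι : X → F} {κ : X → G}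
    (hF : IsFree X F ι) (hG : IsFree X G κ) : Nat.card F = Nat.card G := by
  obtain ⟨u, ⟨hu, huι⟩, -⟩ := hF G inferInstance κ
  obtain ⟨v, ⟨hv, hvκ⟩, -⟩ := hG F inferInstance ι
  have hvu : v ∘ u = id := (hF F inferInstance ι).unique
    ⟨hu.comp hv, by rw [Function.comp_assoc, huι, hvκ]⟩ ⟨isHom_id, Function.id_comp ι⟩
  have huv : u ∘ v = id := (hG G inferInstance κ).unique
    ⟨hv.comp hu, by rw [Function.comp_assoc, hvκ, huι]⟩ ⟨isHom_id, Function.id_comp κ⟩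
  exact Nat.card_congr ⟨u, v, congrFun hvu, congrFun huv⟩

end CDIS

section SupClosedFinsets
variable {α : Type*} [SemilatticeSup α] [DecidableEq α] {s t : Finset α}

lemma Finset.supClosed_union_union_sups (hs : SupClosed (s : Set α))
    (ht : SupClosed (t : Set α)) :
    SupClosed ((s ∪ t ∪ s ⊻ t : Finset α) : Set α) := by
  intro a ha b hb
  simp only [coe_union, Set.mem_union, mem_coe, coe_sups, Set.mem_sups] at ha hb ⊢
  rcases ha with (ha | ha) | ⟨a₁, ha₁, a₂, ha₂, rfl⟩ <;>
    rcases hb with (hb | hb) | ⟨b₁, hb₁, b₂, hb₂, rfl⟩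
  · exact .inl (.inl (hs ha hb))
  · exact .inr ⟨a, ha, b, hb, rfl⟩
  · exact .inr ⟨a ⊔ b₁, hs ha hb₁, b₂, hb₂, sup_assoc ..⟩
  · exact .inr ⟨b, hb, a, ha, sup_comm ..⟩
  · exact .inl (.inr (ht ha hb))
  · exact .inr ⟨b₁, hb₁, a ⊔ b₂, ht ha hb₂, sup_left_comm ..⟩
  · exact .inr ⟨a₁ ⊔ b, hs ha₁ hb, a₂, ha₂, sup_right_comm ..⟩
  · exact .inr ⟨a₁, ha₁, a₂ ⊔ b, ht ha₂ hb, (sup_assoc ..).symm⟩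
  · exact .inr ⟨a₁ ⊔ b₁, hs ha₁ hb₁, a₂ ⊔ b₂, ht ha₂ hb₂, sup_sup_sup_comm ..⟩

lemma Finset.supClosed_sups (hs : SupClosed (s : Set α)) (ht : SupClosed (t : Set α)) :
    SupClosed ((s ⊻ t : Finset α) : Set α) := by
  rw [← sups_eq_self, sups_sups_sups_comm, sups_eq_self.2 hs, sups_eq_self.2 ht]

instance Finset.decidableSupClosed (s : Finset α) : Decidable (SupClosed (s : Set α)) :=
  decidable_of_iff _ sups_subset_self

end SupClosedFinsets

lemma SupClosed.diff_bot {α : Type*} [SemilatticeSup α] [OrderBot α] {s : Set α}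
    (hs : SupClosed s) : SupClosed (s \ {⊥}) := fun _ ha _ hb =>
  ⟨hs ha.1 hb.1, fun h => ha.2 (sup_eq_bot_iff.1 h).1⟩

@[ext]
structure SupClosedFinset (α : Type) [SemilatticeSup α] where
  carrier : Finset α
  supClosed : SupClosed (carrier : Set α)

namespace SupClosedFinset

variable {α : Type} [SemilatticeSup α]

def single (a : α) : SupClosedFinset α := ⟨{a}, by simp⟩

def lift {T : Type} [CDIS T] (φ : α → T) (S : SupClosedFinset α) : T := ∑ a ∈ S.carrier, φ a

lemma lift_single {T : Type} [CDIS T] (φ : α → T) (a : α) : lift φ (single a) = φ a :=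
  sum_singleton φ a

variable [OrderBot α] [DecidableEq α]

instance : CDIS (SupClosedFinset α) where
  mul S T := ⟨S.carrier ⊻ T.carrier, supClosed_sups S.supClosed T.supClosed⟩
  add S T := ⟨S.carrier ∪ T.carrier ∪ S.carrier ⊻ T.carrier,
    supClosed_union_union_sups S.supClosed T.supClosed⟩
  zero := ⟨∅, by simp⟩
  one := ⟨{⊥}, by simp⟩
  mul_assoc _ _ _ := SupClosedFinset.ext (sups_assoc ..)
  mul_comm _ _ := SupClosedFinset.ext (sups_comm ..)
  mul_idem S := SupClosedFinset.ext (sups_eq_self.2 S.supClosed)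
  mul_one S := SupClosedFinset.ext (by simp)
  add_assoc S T U := SupClosedFinset.ext <| by
    dsimp only
    simp only [sups_union_left, sups_union_right, sups_assoc]
    ext; simp only [mem_union]; tauto
  add_comm S T := SupClosedFinset.ext <| by dsimp only; rw [union_comm S.carrier, sups_comm]
  add_idem S := SupClosedFinset.ext <| by simp [sups_eq_self.2 S.supClosed]
  add_zero S := SupClosedFinset.ext <| by simp
  mul_add S T U := SupClosedFinset.ext <| by
    dsimp only
    rw [sups_sups_sups_comm, sups_eq_self.2 S.supClosed, sups_union_right, sups_union_right]
  mul_zero S := SupClosedFinset.ext sups_empty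

lemma carrier_add (S T : SupClosedFinset α) :
    (S + T).carrier = S.carrier ∪ T.carrier ∪ S.carrier ⊻ T.carrier := rfl

lemma carrier_mul (S T : SupClosedFinset α) : (S * T).carrier = S.carrier ⊻ T.carrier := rfl

lemma carrier_zero : (0 : SupClosedFinset α).carrier = ∅ := rfl

lemma single_sup (a b : α) : single (a ⊔ b) = single a * single b :=
  SupClosedFinset.ext (singleton_sups_singleton ..).symm

lemma prod_single {ι : Type*} (s : Finset ι) (f : ι → α) :
    ∏ i ∈ s, single (f i) = single (s.sup f) := by
  induction s using Finset.cons_induction with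
  | empty => rfl
  | cons i s hi ih => rw [prod_cons, sup_cons, ih, single_sup]

lemma sum_single (S : SupClosedFinset α) : ∑ a ∈ S.carrier, single a = S := by
  have sandwich : ∀ A ⊆ S.carrier,
      A ⊆ (∑ a ∈ A, single a).carrier ∧ (∑ a ∈ A, single a).carrier ⊆ S.carrier := by
    intro A
    induction A using Finset.induction_on with
    | empty => simp [carrier_zero]
    | insert a A ha ih =>
      intro hA
      obtain ⟨hlow, hupp⟩ := ih ((subset_insert a A).trans hA)
      have haS : a ∈ S.carrier := hA (mem_insert_self a A)
      rw [sum_insert ha, carrier_add]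
      constructor
      · intro x hx
        rcases mem_insert.1 hx with rfl | hx
        · simp [single]
        · exact mem_union_left _ (mem_union_right _ (hlow hx))
      · refine union_subset (union_subset (by simpa [single] using haS) hupp) ?_
        simp only [single, sups_subset_iff, mem_singleton, forall_eq]
        exact fun c hc => S.supClosed haS (hupp hc)
  obtain ⟨hlow, hupp⟩ := sandwich S.carrier subset_rfl
  exact SupClosedFinset.ext (hupp.antisymm hlow)

variable {T : Type} [CDIS T] {φ : α → T}

lemma lift_mul (hφ : ∀ a b, φ (a ⊔ b) = φ a * φ b) (S U : SupClosedFinset α) :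
    lift φ (S * U) = lift φ S * lift φ U := by
  rw [lift, carrier_mul, ← image_sup_product, sum_image_of_idempotent CDIS.add_self, sum_product,
    lift, lift, sum_mul_sum]
  simp only [Function.uncurry_apply_pair, hφ]

lemma lift_add (hφ : ∀ a b, φ (a ⊔ b) = φ a * φ b) (S U : SupClosedFinset α) :
    lift φ (S + U) = lift φ S + lift φ U := by
  rw [lift, carrier_add, sum_union_of_idempotent CDIS.add_self,
    sum_union_of_idempotent CDIS.add_self, ← lift, ← lift, ← carrier_mul, ← lift, lift_mul hφ,
    add_add_mul_of_idempotent CDIS.add_self CDIS.mul_self]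

lemma isHom_lift (hφ : ∀ a b, φ (a ⊔ b) = φ a * φ b) (hbot : φ ⊥ = 1) : CDIS.IsHom (lift φ) :=
  ⟨lift_mul hφ, lift_add hφ, sum_empty, (lift_single φ ⊥).trans hbot⟩

lemma eq_lift_of_isHom {f : SupClosedFinset α → T} (hf : CDIS.IsHom f)
    (h : ∀ a, f (single a) = φ a) : f = lift φ := by
  funext S
  calc f S = f (∑ a ∈ S.carrier, single a) := by rw [sum_single]
    _ = ∑ a ∈ S.carrier, f (single a) := map_sum hf.toRingHom _ _
    _ = lift φ S := sum_congr rfl fun a _ => h a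

theorem isFree (X : Type) [DecidableEq X] :
    CDIS.IsFree X (SupClosedFinset (Finset X)) (fun x => single {x}) := by
  intro T _ g
  have hmono : ∀ s t : Finset X, ∏ x ∈ s ⊔ t, g x = (∏ x ∈ s, g x) * ∏ x ∈ t, g x :=
    prod_union_of_idempotent CDIS.mul_self g
  refine ⟨lift fun s => ∏ x ∈ s, g x,
    ⟨isHom_lift hmono prod_empty, funext fun x => (lift_single _ _).trans (prod_singleton g x)⟩,
    ?_⟩
  rintro f ⟨hf, hfg⟩
  refine eq_lift_of_isHom hf fun s => ?_
  calc f (single s) = f (∏ x ∈ s, single {x}) := by rw [prod_single, sup_singleton_eq_self]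
    _ = ∏ x ∈ s, f (single {x}) := map_prod hf.toRingHom _ _
    _ = ∏ x ∈ s, g x := prod_congr rfl fun x _ => congrFun hfg x

def equivBoolProd :
    SupClosedFinset α ≃ Bool × {C : Finset α // SupClosed (C : Set α) ∧ ⊥ ∉ C} where
  toFun S := (decide (⊥ ∈ S.carrier),
    ⟨S.carrier.erase ⊥, by rw [coe_erase]; exact S.supClosed.diff_bot, notMem_erase ⊥ _⟩)
  invFun p := ⟨if p.1 then insert ⊥ p.2.1 else p.2.1, by
    split_ifs
    · rw [coe_insert]; exact p.2.2.1.insert_lowerBounds fun _ _ => bot_le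
    · exact p.2.2.1⟩
  left_inv S := by
    by_cases h : ⊥ ∈ S.carrier <;> ext1 <;> simp [h]
  right_inv := by
    rintro ⟨_ | _, C, -, hbot⟩ <;> simp [hbot]

end SupClosedFinset

noncomputable def Finset.supClosedEquivSubalgebra (X : Type) [DecidableEq X] [Finite X] :
    {C : Finset (Finset X) // SupClosed (C : Set (Finset X)) ∧ ⊥ ∉ C} ≃
      {D : Set {s : Finset X // s.Nonempty} //
        ∀ a ∈ D, ∀ b ∈ D,
          (⟨a.1 ∪ b.1, a.2.mono subset_union_left⟩ : {s : Finset X // s.Nonempty}) ∈ D} where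
  toFun C := ⟨{a | a.1 ∈ C.1}, fun _ ha _ hb => C.2.1 ha hb⟩
  invFun D := ⟨(Set.toFinite (Subtype.val '' D.1)).toFinset, by
    refine ⟨?_, fun h => ?_⟩
    · rintro _ hs _ ht
      simp only [Set.Finite.coe_toFinset] at hs ht ⊢
      obtain ⟨a, ha, rfl⟩ := hs
      obtain ⟨b, hb, rfl⟩ := ht
      exact ⟨_, D.2 a ha b hb, rfl⟩
    · obtain ⟨a, -, ha⟩ := (Set.Finite.mem_toFinset _).1 h
      exact a.2.ne_empty ha⟩
  left_inv C := by
    ext s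
    simp only [Set.Finite.mem_toFinset, Set.mem_image, Set.mem_ofPred_eq, Subtype.exists,
      exists_and_right, exists_eq_right]
    exact ⟨fun ⟨_, h⟩ => h,
      fun h => ⟨nonempty_iff_ne_empty.2 fun hs => C.2.2 (by subst hs; exact h), h⟩⟩
  right_inv D := by
    ext a
    simp [Subtype.val_injective.mem_set_image]

theorem SupClosedFinset.nat_card_finset_eq_two_mul (X : Type) [DecidableEq X] [Finite X] :
    Nat.card (SupClosedFinset (Finset X)) = 2 * Nat.card {D : Set {s : Finset X // s.Nonempty} //
      ∀ a ∈ D, ∀ b ∈ D,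
        (⟨a.1 ∪ b.1, a.2.mono subset_union_left⟩ : {s : Finset X // s.Nonempty}) ∈ D} := by
  rw [Nat.card_congr SupClosedFinset.equivBoolProd, Nat.card_prod,
    Nat.card_congr (Finset.supClosedEquivSubalgebra X), Nat.card_eq_fintype_card (α := Bool),
    Fintype.card_bool]

/-- the free commutative doubly idempotent semiring with
constants on two generators has 14 elements; equivalently, the free
semilattice on two generators has 3 elements and 7 subalgebras (including
the empty one), and the free semiring has twice as many elements. -/
theorem free_cdis_card_two :
    Nat.card FreeSL2 = 3 ∧
    Nat.card {C : Set FreeSL2 // ∀ a ∈ C, ∀ b ∈ C, FreeSL2.op a b ∈ C} = 7 ∧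
    (∀ (F : Type) (_ : CDIS F) (ι : Bool → F),
      CDIS.IsFree Bool F ι →
        Nat.card F = 14 ∧
        Nat.card F =
          2 * Nat.card {C : Set FreeSL2 // ∀ a ∈ C, ∀ b ∈ C, FreeSL2.op a b ∈ C}) := by
  have hsub : Nat.card {C : Set FreeSL2 // ∀ a ∈ C, ∀ b ∈ C, FreeSL2.op a b ∈ C} = 7 := by
    refine (Nat.card_congr (Finset.supClosedEquivSubalgebra Bool)).symm.trans ?_
    rw [Nat.card_eq_fintype_card]
    decide
  refine ⟨?_, hsub, fun F _ ι hF => ?_⟩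
  · rw [show FreeSL2 = {s : Finset Bool // s.Nonempty} from rfl, Nat.card_eq_fintype_card]
    decide
  · have hcard := (hF.nat_card_eq (SupClosedFinset.isFree Bool)).trans
      (SupClosedFinset.nat_card_finset_eq_two_mul Bool)
    exact ⟨hcard.trans (congrArg (2 * ·) hsub), hcard⟩
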